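/- Let 0 ≤ s < ∞, α > -1, p > α + 2 and let φ be an entire function. Then the superposition operator S_φ maps Q_s into the Dirichlet-type space 𝒟^p_α (i.e., φ ∘ f ∈ 𝒟^p_α for every f ∈ Q_s) if and only if φ is constant. -/

import Mathlib

open MeasureTheory

noncomputable section

/-- The open unit disc in the complex plane. -/
def unitDisc : Set ℂ := {z : ℂ | ‖z‖ < 1}

/-- The Green's function of the unit disc, `g(z,a) = log |(1 - conj a * z)/(z - a)|`. -/
def greenFn (z a : ℂ) : ℝ :=
  Real.log (‖(1 - (starRingEnd ℂ) a * z) / (z - a)‖)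

/-- Membership in the Dirichlet-type space `𝒟^p_α`:
`f` is analytic on the unit disc and `∫_𝔻 (1-|z|²)^α |f'(z)|^p dA(z) < ∞`. -/
def MemD (p α : ℝ) (f : ℂ → ℂ) : Prop :=
  AnalyticOn ℂ f unitDisc ∧
    ∫⁻ z in unitDisc,
      ENNReal.ofReal ((1 - ‖z‖ ^ 2) ^ α * ‖deriv f z‖ ^ p) < ⊤

/-- Membership in `Q_s`: `f` is analytic on the unit disc and
`sup_{a ∈ 𝔻} ∫_𝔻 |f'(z)|² g(z,a)^s dA(z) < ∞`. -/
def MemQ (s : ℝ) (f : ℂ → ℂ) : Prop :=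
  AnalyticOn ℂ f unitDisc ∧
    (⨆ a ∈ unitDisc, ∫⁻ z in unitDisc,
      ENNReal.ofReal (‖deriv f z‖ ^ 2 * greenFn z a ^ s)) < ⊤

/-- Membership in `BMOA`: `f` is analytic on the unit disc and
`sup_{a ∈ 𝔻} ∫_𝔻 |f'(z)|² g(z,a) dA(z) < ∞`. -/
def MemBMOA (f : ℂ → ℂ) : Prop :=
  AnalyticOn ℂ f unitDisc ∧
    (⨆ a ∈ unitDisc, ∫⁻ z in unitDisc,
      ENNReal.ofReal (‖deriv f z‖ ^ 2 * greenFn z a)) < ⊤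

/-- Membership in the Bloch space: `f` is analytic on the unit disc and
`sup_{z ∈ 𝔻} (1-|z|²)|f'(z)| < ∞`. -/
def MemBloch (f : ℂ → ℂ) : Prop :=
  AnalyticOn ℂ f unitDisc ∧
    ∃ C : ℝ, ∀ z ∈ unitDisc, (1 - ‖z‖ ^ 2) * ‖deriv f z‖ ≤ C

/-- Membership in the Dirichlet space `𝒟`: `f` is analytic on the unit disc and
`∫_𝔻 |f'(z)|² dA(z) < ∞`. -/
def MemDirichlet (f : ℂ → ℂ) : Prop :=
  AnalyticOn ℂ f unitDisc ∧
    ∫⁻ z in unitDisc, ENNReal.ofReal (‖deriv f z‖ ^ 2) < ⊤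

/-- Membership in the weighted Bergman space `A^p_α`: `f` is analytic on the unit disc
and `∫_𝔻 (1-|z|²)^α |f(z)|^p dA(z) < ∞`. -/
def MemBergman (p α : ℝ) (f : ℂ → ℂ) : Prop :=
  AnalyticOn ℂ f unitDisc ∧
    ∫⁻ z in unitDisc,
      ENNReal.ofReal ((1 - ‖z‖ ^ 2) ^ α * ‖f z‖ ^ p) < ⊤

/-- Membership in the Besov space `B¹`: `f` is analytic on the unit disc and
`∫_𝔻 |f''(z)| dA(z) < ∞`. -/
def MemB1 (f : ℂ → ℂ) : Prop :=
  AnalyticOn ℂ f unitDisc ∧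
    ∫⁻ z in unitDisc, ENNReal.ofReal (‖deriv (deriv f) z‖) < ⊤

/-! ### Auxiliary lemmas -/

open Metric in
lemma isOpen_unitDisc : IsOpen unitDisc :=
  isOpen_lt continuous_norm continuous_const

lemma measurableSet_unitDisc : MeasurableSet unitDisc :=
  isOpen_unitDisc.measurableSet

/-- Uniform finiteness of `∫_𝔻 |z-a|^{-β}` for `β < 2`. -/
lemma lemA {β : ℝ} (hβ0 : 0 < β) (hβ2 : β < 2) :
    ∃ C : ENNReal, C < ⊤ ∧ ∀ a : ℂ, ‖a‖ ≤ 1 →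
      (∫⁻ z in unitDisc, ENNReal.ofReal (‖z - a‖ ^ (-β))) ≤ C := by
  classical
  set V : ENNReal := volume (Metric.ball (0:ℂ) 1) with hV
  have hVlt : V < ⊤ := measure_ball_lt_top
  set ρ : ENNReal := ENNReal.ofReal ((2:ℝ) ^ (β - 2)) with hρdef
  have hρ1 : ρ < 1 := by
    rw [hρdef, ← ENNReal.ofReal_one]
    exact ENNReal.ofReal_lt_ofReal_iff_of_nonneg (by positivity) |>.mpr
      (Real.rpow_lt_one_of_one_lt_of_neg one_lt_two (by linarith))
  refine ⟨ENNReal.ofReal 4 * (1 - ρ)⁻¹ * V, ?_, ?_⟩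
  · refine ENNReal.mul_lt_top (ENNReal.mul_lt_top ENNReal.ofReal_lt_top ?_) hVlt
    exact ENNReal.inv_lt_top.mpr (tsub_pos_of_lt hρ1)
  · intro a ha
    set A : ℕ → Set ℂ := fun n => Metric.ball a (2*(1/2:ℝ)^n) \ Metric.ball a (2*(1/2:ℝ)^(n+1))
      with hA
    have cover : unitDisc ⊆ {a} ∪ ⋃ n, A n := by
      intro z hz
      rcases eq_or_ne z a with rfl | hne
      · exact Or.inl rfl
      · right
        have hd0 : 0 < dist z a := dist_pos.mpr hne
        have hd2 : dist z a < 2 := by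
          have h1 : ‖z - a‖ ≤ ‖z‖ + ‖a‖ := by
            simpa using norm_sub_le z a
          have hz1 : ‖z‖ < 1 := hz
          rw [Complex.dist_eq]
          linarith
        have hex : ∃ k, 2*(1/2:ℝ)^k ≤ dist z a := by
          obtain ⟨k, hk⟩ := exists_pow_lt_of_lt_one
            (show (0:ℝ) < dist z a / 2 by linarith) (show (1/2:ℝ) < 1 by norm_num)
          exact ⟨k, by linarith⟩
        have hk₀le : 2*(1/2:ℝ)^(Nat.find hex) ≤ dist z a := Nat.find_spec hex
        have hk₀pos : Nat.find hex ≠ 0 := by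
          intro h0
          rw [h0] at hk₀le
          norm_num at hk₀le
          linarith
        obtain ⟨n, hn⟩ := Nat.exists_eq_succ_of_ne_zero hk₀pos
        have hlt : dist z a < 2*(1/2:ℝ)^n := by
          by_contra h
          exact Nat.find_min hex (by omega : n < Nat.find hex) (le_of_not_gt h)
        refine Set.mem_iUnion.mpr ⟨n, ?_, ?_⟩
        · exact Metric.mem_ball.mpr hlt
        · intro hmem
          rw [Metric.mem_ball] at hmem
          rw [hn] at hk₀le
          exact absurd hmem (not_lt.mpr hk₀le)
    have hterm : ∀ n : ℕ, (∫⁻ z in A n, ENNReal.ofReal (‖z - a‖ ^ (-β)))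
        ≤ ENNReal.ofReal 4 * ρ^n * V := by
      intro n
      have hub : ∀ z ∈ A n, ENNReal.ofReal (‖z - a‖ ^ (-β))
          ≤ ENNReal.ofReal (((1/2:ℝ)^n) ^ (-β)) := by
        intro z hz
        apply ENNReal.ofReal_le_ofReal
        have h1 : (1/2:ℝ)^n ≤ ‖z - a‖ := by
          have h2 := hz.2
          rw [Metric.mem_ball, not_lt, Complex.dist_eq] at h2
          have h3 : 2*(1/2:ℝ)^(n+1) = (1/2:ℝ)^n := by ring
          linarith
        exact Real.rpow_le_rpow_of_nonpos (by positivity) h1 (by linarith)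
      have hmeasA : MeasurableSet (A n) :=
        measurableSet_ball.diff measurableSet_ball
      calc (∫⁻ z in A n, ENNReal.ofReal (‖z - a‖ ^ (-β)))
          ≤ ∫⁻ _ in A n, ENNReal.ofReal (((1/2:ℝ)^n) ^ (-β)) :=
            setLIntegral_mono' hmeasA hub
        _ = ENNReal.ofReal (((1/2:ℝ)^n) ^ (-β)) * volume (A n) := setLIntegral_const _ _
        _ ≤ ENNReal.ofReal (((1/2:ℝ)^n) ^ (-β)) *
            (ENNReal.ofReal ((2*(1/2:ℝ)^n) ^ (2:ℕ)) * V) := by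
            gcongr
            calc volume (A n) ≤ volume (Metric.ball a (2*(1/2:ℝ)^n)) :=
                  measure_mono Set.diff_subset
              _ = ENNReal.ofReal ((2*(1/2:ℝ)^n) ^ (2:ℕ)) * V := by
                  rw [Measure.addHaar_ball volume a (by positivity),
                    Complex.finrank_real_complex]
        _ = ENNReal.ofReal 4 * ρ^n * V := by
            rw [← mul_assoc]
            congr 1
            rw [hρdef, ← ENNReal.ofReal_pow (by positivity),
              ← ENNReal.ofReal_mul (by positivity), ← ENNReal.ofReal_mul (by norm_num)]
            congr 1
            have hb2 : (0:ℝ) < 2 := two_pos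
            have h2n : ((1/2:ℝ)^n : ℝ) = (2:ℝ) ^ (-(n:ℝ)) := by
              rw [one_div, inv_pow, ← Real.rpow_natCast (2:ℝ) n, ← Real.rpow_neg hb2.le]
            have e1 : ((1/2:ℝ)^n) ^ (-β) = (2:ℝ) ^ ((n:ℝ)*β) := by
              rw [h2n, ← Real.rpow_mul hb2.le]
              congr 1; ring
            have e2 : ((2:ℝ) ^ (β - 2)) ^ n = (2:ℝ) ^ ((β-2)*(n:ℝ)) := by
              rw [← Real.rpow_natCast ((2:ℝ)^(β-2)) n, ← Real.rpow_mul hb2.le]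
            have e3 : (2*(1/2:ℝ)^n) ^ (2:ℕ) = 4 * (2:ℝ) ^ (-(2*(n:ℝ))) := by
              have h4 : ((2:ℝ) ^ (-(n:ℝ))) ^ (2:ℕ) = (2:ℝ) ^ (-(2*(n:ℝ))) := by
                rw [← Real.rpow_natCast ((2:ℝ) ^ (-(n:ℝ))) 2, ← Real.rpow_mul hb2.le]
                congr 1; push_cast; ring
              rw [mul_pow, h2n, h4]
              norm_num
            rw [e1, e2, e3, mul_comm ((2:ℝ) ^ ((n:ℝ)*β)) _, mul_assoc,
              ← Real.rpow_add hb2]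
            congr 1; ring
    calc (∫⁻ z in unitDisc, ENNReal.ofReal (‖z - a‖ ^ (-β)))
        ≤ ∫⁻ z in {a} ∪ ⋃ n, A n, ENNReal.ofReal (‖z - a‖ ^ (-β)) :=
          lintegral_mono_set cover
      _ ≤ (∫⁻ z in ({a} : Set ℂ), ENNReal.ofReal (‖z - a‖ ^ (-β)))
          + ∫⁻ z in ⋃ n, A n, ENNReal.ofReal (‖z - a‖ ^ (-β)) :=
          lintegral_union_le _ _ _
      _ ≤ 0 + ∑' n, ∫⁻ z in A n, ENNReal.ofReal (‖z - a‖ ^ (-β)) := by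
          gcongr
          · rw [setLIntegral_measure_zero _ _ (measure_singleton a)]
          · exact lintegral_iUnion_le _ _
      _ ≤ ∑' n : ℕ, (ENNReal.ofReal 4 * ρ^n * V) := by
          rw [zero_add]
          exact ENNReal.tsum_le_tsum hterm
      _ = ENNReal.ofReal 4 * (1-ρ)⁻¹ * V := by
          rw [ENNReal.tsum_mul_right, ENNReal.tsum_mul_left, ENNReal.tsum_geometric]

lemma normSq_identity (z a : ℂ) :
    Complex.normSq (1 - (starRingEnd ℂ) a * z) - Complex.normSq (z - a)
      = (1 - Complex.normSq a) * (1 - Complex.normSq z) := by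
  simp only [Complex.normSq_apply, Complex.sub_re, Complex.sub_im, Complex.mul_re,
    Complex.mul_im, Complex.one_re, Complex.one_im, Complex.conj_re, Complex.conj_im]
  ring

lemma abs_sub_le_abs_one_sub_conj {z a : ℂ} (hz : ‖z‖ < 1)
    (ha : ‖a‖ < 1) :
    ‖z - a‖ ≤ ‖1 - (starRingEnd ℂ) a * z‖ := by
  have h1 : Complex.normSq (z - a) ≤ Complex.normSq (1 - (starRingEnd ℂ) a * z) := by
    have h2 := normSq_identity z a
    have h3 : Complex.normSq a < 1 := by
      rw [← Complex.sq_norm]; nlinarith [norm_nonneg a]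
    have h4 : Complex.normSq z < 1 := by
      rw [← Complex.sq_norm]; nlinarith [norm_nonneg z]
    nlinarith
  rw [Complex.norm_def, Complex.norm_def]
  exact Real.sqrt_le_sqrt h1

lemma greenFn_nonneg {z a : ℂ} (hz : ‖z‖ < 1) (ha : ‖a‖ < 1) :
    0 ≤ greenFn z a := by
  rcases eq_or_ne z a with rfl | hne
  · simp [greenFn]
  · have hzsub : 0 < ‖z - a‖ := norm_pos_iff.mpr (sub_ne_zero.mpr hne)
    apply Real.log_nonneg
    rw [norm_div]
    exact (one_le_div hzsub).mpr (abs_sub_le_abs_one_sub_conj hz ha)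

/-- Pointwise bound on powers of the Green's function. -/
lemma green_bound {s δ : ℝ} (hs : 0 ≤ s) (hδ : 0 < δ) :
    ∃ C : ℝ, 0 ≤ C ∧ ∀ z a : ℂ, ‖z‖ < 1 → ‖a‖ < 1 →
      greenFn z a ^ s ≤ C * (1 + ‖z - a‖ ^ (-δ)) := by
  rcases eq_or_lt_of_le hs with hs0 | hs0
  · refine ⟨1, zero_le_one, fun z a hz ha => ?_⟩
    rw [← hs0, Real.rpow_zero]
    nlinarith [Real.rpow_nonneg (norm_nonneg (z-a)) (-δ)]
  · refine ⟨(s/δ)^s * 2^δ, by positivity, fun z a hz ha => ?_⟩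
    rcases eq_or_ne z a with rfl | hne
    · have hg : greenFn z z = 0 := by
        simp [greenFn]
      rw [hg, Real.zero_rpow hs0.ne']
      positivity
    · have hzsub : 0 < ‖z - a‖ := norm_pos_iff.mpr (sub_ne_zero.mpr hne)
      set B := ‖(1 - (starRingEnd ℂ) a * z)/(z - a)‖ with hBdef
      have hBeq : B = ‖1 - (starRingEnd ℂ) a * z‖ / ‖z - a‖ := by
        rw [hBdef, norm_div]
      have hB1 : 1 ≤ B := by
        rw [hBeq]
        exact (one_le_div hzsub).mpr (abs_sub_le_abs_one_sub_conj hz ha)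
      have hBpos : 0 < B := lt_of_lt_of_le one_pos hB1
      set lam := δ / s with hlam
      have hlam0 : 0 < lam := div_pos hδ hs0
      have hlog : Real.log B ≤ B ^ lam / lam := by
        rw [le_div_iff₀ hlam0]
        have h1 : Real.log (B ^ lam) = lam * Real.log B := Real.log_rpow hBpos lam
        have h2 : Real.log (B ^ lam) ≤ B ^ lam - 1 :=
          Real.log_le_sub_one_of_pos (Real.rpow_pos_of_pos hBpos lam)
        nlinarith
      have hgB : greenFn z a = Real.log B := rfl
      have hgs : greenFn z a ^ s ≤ (B ^ lam / lam) ^ s := by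
        rw [hgB]
        exact Real.rpow_le_rpow (Real.log_nonneg hB1) hlog hs
      have he : (B ^ lam / lam) ^ s = B ^ δ * (1/lam) ^ s := by
        rw [div_eq_mul_inv,
          Real.mul_rpow (Real.rpow_nonneg hBpos.le _) (inv_nonneg.mpr hlam0.le),
          ← Real.rpow_mul hBpos.le, one_div]
        congr 2
        rw [hlam]
        field_simp
      have hBδ : B ^ δ ≤ 2^δ * ‖z-a‖ ^ (-δ) := by
        rw [hBeq, Real.div_rpow (norm_nonneg _) (norm_nonneg _),
          div_eq_mul_inv, ← Real.rpow_neg (norm_nonneg _)]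
        apply mul_le_mul_of_nonneg_right ?_ (Real.rpow_nonneg (norm_nonneg _) _)
        apply Real.rpow_le_rpow (norm_nonneg _) ?_ hδ.le
        have h5 : ‖1 - (starRingEnd ℂ) a * z‖
            ≤ 1 + ‖(starRingEnd ℂ) a * z‖ := by
          have := norm_sub_le (1:ℂ) ((starRingEnd ℂ) a * z)
          simpa using this
        have h6 : ‖(starRingEnd ℂ) a * z‖ ≤ 1 := by
          rw [norm_mul, Complex.norm_conj]
          nlinarith [norm_nonneg a, norm_nonneg z]
        linarith
      have hfin : greenFn z a ^ s ≤ (2^δ * ‖z-a‖ ^ (-δ)) * (s/δ) ^ s := by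
        have h7 : (1/lam) = s/δ := by rw [hlam]; field_simp
        have h8 : (0:ℝ) ≤ (1/lam) ^ s := Real.rpow_nonneg (by positivity) _
        calc greenFn z a ^ s ≤ (B ^ lam / lam) ^ s := hgs
          _ = B ^ δ * (1/lam) ^ s := he
          _ ≤ (2^δ * ‖z-a‖ ^ (-δ)) * (1/lam) ^ s :=
              mul_le_mul_of_nonneg_right hBδ h8
          _ = (2^δ * ‖z-a‖ ^ (-δ)) * (s/δ) ^ s := by rw [h7]
      have h9 : (0:ℝ) ≤ (s/δ)^s * 2^δ := by positivity
      calc greenFn z a ^ s ≤ (2^δ * ‖z-a‖ ^ (-δ)) * (s/δ) ^ s := hfin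
        _ = ((s/δ)^s * 2^δ) * ‖z-a‖ ^ (-δ) := by ring
        _ ≤ ((s/δ)^s * 2^δ) * (1 + ‖z-a‖ ^ (-δ)) := by nlinarith

/-- Young's inequality for products. -/
lemma young_pt {x y q q' : ℝ} (hx : 0 ≤ x) (hy : 0 ≤ y) (hq : 0 < q) (hq' : 0 < q')
    (hcon : 1/q + 1/q' = 1) : x * y ≤ x^q + y^q' := by
  have h := Real.geom_mean_le_arith_mean2_weighted (w₁ := 1/q) (w₂ := 1/q')
    (p₁ := x^q) (p₂ := y^q') (by positivity) (by positivity)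
    (Real.rpow_nonneg hx _) (Real.rpow_nonneg hy _) hcon
  have e1 : (x^q)^(1/q) = x := by
    rw [← Real.rpow_mul hx, mul_one_div, div_self hq.ne', Real.rpow_one]
  have e2 : (y^q')^(1/q') = y := by
    rw [← Real.rpow_mul hy, mul_one_div, div_self hq'.ne', Real.rpow_one]
  rw [e1, e2] at h
  have h1 : (1/q) * x^q ≤ x^q := by
    nlinarith [Real.rpow_nonneg hx q, one_div_pos.mpr hq', one_div_pos.mpr hq]
  have h2 : (1/q') * y^q' ≤ y^q' := by
    nlinarith [Real.rpow_nonneg hy q', one_div_pos.mpr hq', one_div_pos.mpr hq]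
  linarith

lemma meas_aux (c : ℂ) (β : ℝ) (hβ : 0 ≤ β) :
    Measurable fun z : ℂ => ENNReal.ofReal (‖z - c‖ ^ (-β)) := by
  have h : ∀ z : ℂ, ‖z - c‖ ^ (-β) = (‖z - c‖ ^ β)⁻¹ :=
    fun z => Real.rpow_neg (norm_nonneg _) β
  simp_rw [h]
  exact (((Real.continuous_rpow_const hβ).comp
    (continuous_norm.comp (continuous_id.sub continuous_const))).measurable).inv.ennreal_ofReal

/-- Membership in `Q_s` from a derivative bound `|F'(z)| ≤ η |z-1|^{-γ}` with `γ < 1`. -/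
lemma memQ_of_deriv_bound {s γ η : ℝ} (hs : 0 ≤ s) (hγ0 : 0 < γ) (hγ1 : γ < 1) (hη : 0 ≤ η)
    {F : ℂ → ℂ} (hA : AnalyticOn ℂ F unitDisc)
    (hd : ∀ z ∈ unitDisc, ‖deriv F z‖ ≤ η * ‖z - 1‖ ^ (-γ)) :
    MemQ s F := by
  obtain ⟨CG, hCG0, hCG⟩ := green_bound hs (show (0:ℝ) < 1 - γ by linarith)
  obtain ⟨C1, hC1, hC1le⟩ := lemA (show (0:ℝ) < 2*γ by linarith) (by linarith)
  obtain ⟨C2, hC2, hC2le⟩ := lemA (show (0:ℝ) < 1+γ by linarith) (by linarith)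
  refine ⟨hA, ?_⟩
  set K := η^2 * CG with hK
  have hK0 : 0 ≤ K := by positivity
  set q : ℝ := (1+γ)/(2*γ) with hqdef
  set q' : ℝ := (1+γ)/(1-γ) with hq'def
  have hq : 0 < q := by
    rw [hqdef]
    apply div_pos <;> linarith
  have hq' : 0 < q' := by
    rw [hq'def]
    apply div_pos <;> linarith
  have hcon : 1/q + 1/q' = 1 := by
    rw [hqdef, hq'def]
    field_simp
    ring
  have hbound : ∀ a, a ∈ unitDisc →
      (∫⁻ z in unitDisc, ENNReal.ofReal (‖deriv F z‖ ^ 2 * greenFn z a ^ s))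
        ≤ ENNReal.ofReal K * (C1 + (C2 + C2)) := by
    intro a ha
    have hpt : ∀ z ∈ unitDisc,
        ENNReal.ofReal (‖deriv F z‖ ^ 2 * greenFn z a ^ s) ≤
        ENNReal.ofReal (K * (‖z-1‖ ^ (-(2*γ)) +
          (‖z-1‖ ^ (-(1+γ)) + ‖z-a‖ ^ (-(1+γ))))) := by
      intro z hz
      apply ENNReal.ofReal_le_ofReal
      set X1 := ‖z-1‖ ^ (-(2*γ)) with hX1
      set Y := ‖z-a‖ ^ (-(1-γ)) with hY
      have hX1n : 0 ≤ X1 := Real.rpow_nonneg (norm_nonneg _) _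
      have hYn : 0 ≤ Y := Real.rpow_nonneg (norm_nonneg _) _
      have h1 : ‖deriv F z‖ ^ 2 ≤ η^2 * X1 := by
        have h2 : ‖deriv F z‖ ^ 2 ≤ (η * ‖z - 1‖ ^ (-γ))^2 := by
          have := hd z hz
          nlinarith [norm_nonneg (deriv F z),
            Real.rpow_nonneg (norm_nonneg (z-1)) (-γ)]
        have h3 : (‖z - 1‖ ^ (-γ))^(2:ℕ) = X1 := by
          rw [hX1, ← Real.rpow_natCast (‖z - 1‖ ^ (-γ)) 2,
            ← Real.rpow_mul (norm_nonneg _)]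
          congr 1; push_cast; ring
        calc ‖deriv F z‖ ^ 2 ≤ (η * ‖z - 1‖ ^ (-γ))^2 := h2
          _ = η^2 * (‖z - 1‖ ^ (-γ))^(2:ℕ) := by ring
          _ = η^2 * X1 := by rw [h3]
      have hg0 : 0 ≤ greenFn z a ^ s :=
        Real.rpow_nonneg (greenFn_nonneg hz ha) s
      have h2 : greenFn z a ^ s ≤ CG * (1 + Y) := hCG z a hz ha
      have hprod : ‖deriv F z‖ ^ 2 * greenFn z a ^ s ≤ K * (X1 * (1 + Y)) := by
        have := mul_le_mul h1 h2 hg0 (by positivity : (0:ℝ) ≤ η^2 * X1)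
        calc ‖deriv F z‖ ^ 2 * greenFn z a ^ s
            ≤ (η^2 * X1) * (CG * (1 + Y)) := this
          _ = K * (X1 * (1 + Y)) := by rw [hK]; ring
      have hyoung : X1 * Y ≤ ‖z-1‖ ^ (-(1+γ)) + ‖z-a‖ ^ (-(1+γ)) := by
        have hy := young_pt hX1n hYn hq hq' hcon
        have hγne : γ ≠ 0 := ne_of_gt hγ0
        have h1γne : (1:ℝ) - γ ≠ 0 := by linarith
        have e1 : X1 ^ q = ‖z-1‖ ^ (-(1+γ)) := by
          rw [hX1, ← Real.rpow_mul (norm_nonneg _)]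
          congr 1
          rw [hqdef]
          field_simp
        have e2 : Y ^ q' = ‖z-a‖ ^ (-(1+γ)) := by
          rw [hY, ← Real.rpow_mul (norm_nonneg _)]
          congr 1
          rw [hq'def]
          field_simp
        rw [e1, e2] at hy
        exact hy
      calc ‖deriv F z‖ ^ 2 * greenFn z a ^ s
          ≤ K * (X1 * (1 + Y)) := hprod
        _ = K * (X1 + X1 * Y) := by ring
        _ ≤ K * (X1 + (‖z-1‖ ^ (-(1+γ)) + ‖z-a‖ ^ (-(1+γ)))) := by
            apply mul_le_mul_of_nonneg_left _ hK0
            linarith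
    have hsplit : ∀ z : ℂ,
        ENNReal.ofReal (K * (‖z-1‖ ^ (-(2*γ)) +
          (‖z-1‖ ^ (-(1+γ)) + ‖z-a‖ ^ (-(1+γ))))) =
        ENNReal.ofReal K * (ENNReal.ofReal (‖z-1‖ ^ (-(2*γ))) +
          (ENNReal.ofReal (‖z-1‖ ^ (-(1+γ))) +
           ENNReal.ofReal (‖z-a‖ ^ (-(1+γ))))) := by
      intro z
      rw [ENNReal.ofReal_mul hK0,
        ENNReal.ofReal_add (Real.rpow_nonneg (norm_nonneg _) _)
          (by positivity),
        ENNReal.ofReal_add (Real.rpow_nonneg (norm_nonneg _) _)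
          (Real.rpow_nonneg (norm_nonneg _) _)]
    calc (∫⁻ z in unitDisc, ENNReal.ofReal (‖deriv F z‖ ^ 2 * greenFn z a ^ s))
        ≤ ∫⁻ z in unitDisc, ENNReal.ofReal (K * (‖z-1‖ ^ (-(2*γ)) +
            (‖z-1‖ ^ (-(1+γ)) + ‖z-a‖ ^ (-(1+γ))))) :=
          setLIntegral_mono' measurableSet_unitDisc hpt
      _ = ENNReal.ofReal K * ∫⁻ z in unitDisc,
            (ENNReal.ofReal (‖z-1‖ ^ (-(2*γ))) +
            (ENNReal.ofReal (‖z-1‖ ^ (-(1+γ))) +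
             ENNReal.ofReal (‖z-a‖ ^ (-(1+γ))))) := by
          simp_rw [hsplit]
          rw [lintegral_const_mul' _ _ ENNReal.ofReal_ne_top]
      _ ≤ ENNReal.ofReal K * (C1 + (C2 + C2)) := by
          apply mul_le_mul_right
          rw [lintegral_add_left (meas_aux 1 (2*γ) (by linarith)),
            lintegral_add_left (meas_aux 1 (1+γ) (by linarith))]
          have hone : ‖(1:ℂ)‖ ≤ 1 := by simp
          exact add_le_add (hC1le 1 hone)
            (add_le_add (hC2le 1 hone) (hC2le a (le_of_lt ha)))
  refine lt_of_le_of_lt (iSup₂_le hbound) ?_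
  refine ENNReal.mul_lt_top ENNReal.ofReal_lt_top ?_
  exact ENNReal.add_lt_top.mpr ⟨hC1, ENNReal.add_lt_top.mpr ⟨hC2, hC2⟩⟩

/-- Divergence of the weighted integral when the exponent is supercritical. -/
lemma lemB {α m c₀ : ℝ} (hm : α + 2 < m) (hm0 : 0 < m) (hc₀ : 0 < c₀) :
    ∫⁻ z in unitDisc,
      ENNReal.ofReal (c₀ * ((1 - ‖z‖ ^ 2) ^ α * ‖z - 1‖ ^ (-m))) = ⊤ := by
  set u : ℕ → ℝ := fun n => (1/2:ℝ)^n with hu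
  have hu_pos : ∀ n, 0 < u n := fun n => by positivity
  have hu_le1 : ∀ n, u n ≤ 1 := fun n => by
    rw [hu]
    exact pow_le_one₀ (by norm_num) (by norm_num)
  set ctr : ℕ → ℂ := fun n => ((1 - 3*(u n)/4 : ℝ) : ℂ) + Complex.I * ((u n / 4 : ℝ) : ℂ)
    with hctr
  set B : ℕ → Set ℂ := fun n => Metric.ball (ctr n) (u n / 8) with hB
  have hcoord : ∀ n, ∀ z ∈ B n,
      (5/8)*(u n) < 1 - z.re ∧ 1 - z.re < (7/8)*(u n) ∧
      (1/8)*(u n) < z.im ∧ z.im < (3/8)*(u n) := by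
    intro n z hz
    rw [hB, Metric.mem_ball, Complex.dist_eq] at hz
    have hre : |(z - ctr n).re| ≤ ‖z - ctr n‖ := Complex.abs_re_le_norm _
    have him : |(z - ctr n).im| ≤ ‖z - ctr n‖ := Complex.abs_im_le_norm _
    have hcre : (ctr n).re = 1 - 3*(u n)/4 := by
      simp [hctr]
    have hcim : (ctr n).im = u n / 4 := by
      simp [hctr]
    rw [Complex.sub_re, hcre] at hre
    rw [Complex.sub_im, hcim] at him
    have hre' := abs_lt.mp (lt_of_le_of_lt hre hz)
    have him' := abs_lt.mp (lt_of_le_of_lt him hz)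
    refine ⟨by linarith [hre'.1, hre'.2], by linarith [hre'.1, hre'.2],
      by linarith [him'.1, him'.2], by linarith [him'.1, him'.2]⟩
  have habs2 : ∀ z : ℂ, ‖z‖ ^ 2 = z.re^2 + z.im^2 := by
    intro z
    rw [Complex.sq_norm, Complex.normSq_apply]
    ring
  have hsub : ∀ n, B n ⊆ unitDisc := by
    intro n z hz
    obtain ⟨h1, h2, h3, h4⟩ := hcoord n z hz
    show ‖z‖ < 1
    have h5 : ‖z‖ ^ 2 < 1 := by
      rw [habs2]
      nlinarith [hu_pos n, hu_le1 n]
    nlinarith [norm_nonneg z]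
  -- lower bounds for the integrand on B n
  have hlow1 : ∀ n, ∀ z ∈ B n, u n / 2 ≤ 1 - ‖z‖ ^ 2 ∧
      1 - ‖z‖ ^ 2 ≤ 2 * u n := by
    intro n z hz
    obtain ⟨h1, h2, h3, h4⟩ := hcoord n z hz
    rw [habs2]
    constructor <;> nlinarith [hu_pos n, hu_le1 n]
  have hlow2 : ∀ n, ∀ z ∈ B n, 0 < ‖z - 1‖ ∧ ‖z - 1‖ ≤ u n := by
    intro n z hz
    obtain ⟨h1, h2, h3, h4⟩ := hcoord n z hz
    have hz1 : z ≠ 1 := by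
      intro h
      rw [h] at h1
      simp at h1
      nlinarith [hu_pos n]
    refine ⟨norm_pos_iff.mpr (sub_ne_zero.mpr hz1), ?_⟩
    have h5 : ‖z-1‖ ^ 2 ≤ (u n)^2 := by
      rw [habs2]
      simp only [Complex.sub_re, Complex.sub_im, Complex.one_re, Complex.one_im]
      nlinarith [hu_pos n]
    have := hu_pos n
    nlinarith [norm_nonneg (z-1)]
  set c₂ : ENNReal := ENNReal.ofReal (c₀ * (2:ℝ)^(-|α|) / 64) * volume (Metric.ball (0:ℂ) 1)
    with hc₂
  have hc₂ne : c₂ ≠ 0 := by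
    rw [hc₂]
    apply mul_ne_zero
    · exact (ENNReal.ofReal_pos.mpr (by positivity)).ne'
    · exact (Metric.measure_ball_pos volume 0 one_pos).ne'
  have hterm : ∀ n, c₂ ≤ ∫⁻ z in B n,
      ENNReal.ofReal (c₀ * ((1 - ‖z‖ ^ 2) ^ α * ‖z - 1‖ ^ (-m))) := by
    intro n
    have hpt : ∀ z ∈ B n, c₀ * ((2:ℝ)^(-|α|) * (u n)^(α - m)) ≤
        c₀ * ((1 - ‖z‖ ^ 2) ^ α * ‖z - 1‖ ^ (-m)) := by
      intro z hz
      obtain ⟨ha1, ha2⟩ := hlow1 n z hz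
      obtain ⟨hb1, hb2⟩ := hlow2 n z hz
      have hun := hu_pos n
      have h1z : 0 < 1 - ‖z‖ ^ 2 := by linarith
      have hw : (2:ℝ)^(-|α|) * (u n)^α ≤ (1 - ‖z‖ ^ 2) ^ α := by
        rcases le_or_gt 0 α with hα0 | hα0
        · have h6 : ((u n)/2) ^ α ≤ (1 - ‖z‖ ^ 2) ^ α :=
            Real.rpow_le_rpow (by positivity) ha1 hα0
          have h7 : ((u n)/2 : ℝ) ^ α = (u n)^α * (2:ℝ)^(-α) := by
            rw [div_eq_mul_inv, Real.mul_rpow (hu_pos n).le (by norm_num),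
              Real.inv_rpow (by norm_num : (0:ℝ) ≤ 2),
              ← Real.rpow_neg (by norm_num : (0:ℝ) ≤ 2)]
          rw [abs_of_nonneg hα0]
          rw [h7] at h6
          linarith [h6]
        · have h6 : (2*(u n)) ^ α ≤ (1 - ‖z‖ ^ 2) ^ α :=
            Real.rpow_le_rpow_of_nonpos h1z ha2 hα0.le
          have h7 : (2*(u n) : ℝ) ^ α = (u n)^α * (2:ℝ)^α := by
            rw [Real.mul_rpow (by norm_num) (hu_pos n).le]
            ring
          rw [abs_of_neg hα0, neg_neg]
          rw [h7] at h6
          linarith [h6]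
      have hw2 : (u n)^(-m) ≤ ‖z - 1‖ ^ (-m) :=
        Real.rpow_le_rpow_of_nonpos hb1 hb2 (by linarith)
      have hcomb : (2:ℝ)^(-|α|) * (u n)^(α-m) ≤
          (1 - ‖z‖ ^ 2) ^ α * ‖z - 1‖ ^ (-m) := by
        have e : (u n)^(α-m) = (u n)^α * (u n)^(-m) := by
          rw [← Real.rpow_add hun]
          ring_nf
        rw [e, ← mul_assoc]
        apply mul_le_mul hw hw2 (Real.rpow_nonneg hun.le _)
          (Real.rpow_nonneg h1z.le _)
      exact mul_le_mul_of_nonneg_left hcomb hc₀.le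
    calc c₂ ≤ ENNReal.ofReal (c₀ * ((2:ℝ)^(-|α|) * (u n)^(α - m))) * volume (B n) := by
          rw [hB, Measure.addHaar_ball volume _ (by positivity : (0:ℝ) ≤ u n / 8),
            Complex.finrank_real_complex, hc₂, ← mul_assoc,
            ← ENNReal.ofReal_mul (by positivity)]
          apply mul_le_mul_left
          apply ENNReal.ofReal_le_ofReal
          have e2 : (u n)^(α - m + 2) = (u n)^(α-m) * (u n)^(2:ℕ) := by
            rw [← Real.rpow_natCast (u n) 2, ← Real.rpow_add (hu_pos n)]
            norm_num
          have e3 : (1:ℝ) ≤ (u n)^(α - m + 2) :=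
            Real.one_le_rpow_of_pos_of_le_one_of_nonpos (hu_pos n) (hu_le1 n)
              (by linarith)
          have e4 : c₀ * ((2:ℝ)^(-|α|) * (u n)^(α - m)) * ((u n / 8)^(2:ℕ)) =
              (c₀ * (2:ℝ)^(-|α|) / 64) * (u n)^(α - m + 2) := by
            rw [e2, div_pow]
            ring
          rw [e4]
          have hX : (0:ℝ) < c₀ * (2:ℝ)^(-|α|) / 64 := by positivity
          nlinarith [e3, hX]
      _ ≤ ∫⁻ z in B n,
          ENNReal.ofReal (c₀ * ((1 - ‖z‖ ^ 2) ^ α * ‖z - 1‖ ^ (-m))) := by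
          rw [← setLIntegral_const]
          apply setLIntegral_mono' measurableSet_ball
          intro z hz
          exact ENNReal.ofReal_le_ofReal (hpt z hz)
  have hdisj : Pairwise (Function.onFun Disjoint B) := by
    have haux : ∀ i j, i < j → Disjoint (B i) (B j) := by
      intro i j hij
      rw [Set.disjoint_left]
      intro z hzi hzj
      obtain ⟨hi1, hi2, _, _⟩ := hcoord i z hzi
      obtain ⟨hj1, hj2, _, _⟩ := hcoord j z hzj
      have h1 : u j ≤ u i / 2 := by
        have h2 : (1/2:ℝ)^j ≤ (1/2:ℝ)^(i+1) :=
          pow_le_pow_of_le_one (by norm_num) (by norm_num) (by omega)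
        have h3 : (1/2:ℝ)^(i+1) = (1/2:ℝ)^i/2 := by
          rw [pow_succ]; ring
        rw [hu]
        simp only []
        linarith [h2, h3]
      linarith
    intro i j hij
    rcases hij.lt_or_gt with h | h
    · exact haux i j h
    · exact (haux j i h).symm
  have hUsub : (⋃ n, B n) ⊆ unitDisc := Set.iUnion_subset hsub
  have h1 : (⊤:ENNReal) ≤ ∫⁻ z in unitDisc,
      ENNReal.ofReal (c₀ * ((1 - ‖z‖ ^ 2) ^ α * ‖z - 1‖ ^ (-m))) := by
    calc (⊤:ENNReal) = ∑' (_:ℕ), c₂ := (ENNReal.tsum_const_eq_top_of_ne_zero hc₂ne).symm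
      _ ≤ ∑' n, ∫⁻ z in B n,
          ENNReal.ofReal (c₀ * ((1 - ‖z‖ ^ 2) ^ α * ‖z - 1‖ ^ (-m))) :=
          ENNReal.tsum_le_tsum hterm
      _ = ∫⁻ z in ⋃ n, B n,
          ENNReal.ofReal (c₀ * ((1 - ‖z‖ ^ 2) ^ α * ‖z - 1‖ ^ (-m))) :=
          (lintegral_iUnion (fun n => measurableSet_ball) hdisj _).symm
      _ ≤ _ := lintegral_mono_set hUsub
  exact top_unique h1

/-- For `0 ≤ s < ∞`, `α > -1` and `p > α + 2`, `S_φ(Q_s) ⊆ 𝒟^p_α` iff `φ`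
is constant. -/
theorem stmt_16 (s : ℝ) (hs : 0 ≤ s) (α : ℝ) (hα : -1 < α) (p : ℝ) (hp : α + 2 < p)
    (φ : ℂ → ℂ) (hφ : Differentiable ℂ φ) :
    (∀ f : ℂ → ℂ, MemQ s f → MemD p α (φ ∘ f)) ↔
      (∃ c : ℂ, ∀ w : ℂ, φ w = c) := by
  have hp0 : 0 < p := by linarith
  constructor
  · -- forward direction
    intro H
    have hall : ∀ w₀ : ℂ, deriv φ w₀ = 0 := by
      intro w₀
      by_contra hd0
      -- basic positivity facts
      set t : ℝ := (α+2)/p with ht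
      have ht0 : 0 < t := by
        rw [ht]
        exact div_pos (by linarith) hp0
      have ht1 : t < 1 := by
        rw [ht, div_lt_one hp0]; linarith
      set γ : ℝ := (1+t)/2 with hγ
      have hγ0 : 0 < γ := by rw [hγ]; linarith
      have hγ1 : γ < 1 := by rw [hγ]; linarith
      set c' : ℝ := 1 - γ with hc'
      have hc'0 : 0 < c' := by rw [hc']; linarith
      have hc'1 : c' < 1 := by rw [hc']; linarith
      -- continuity of deriv φ near w₀
      have hφan : AnalyticOnNhd ℂ φ Set.univ := fun x _ => hφ.analyticAt x
      have hder_an : AnalyticOnNhd ℂ (deriv φ) Set.univ := hφan.deriv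
      have hder_cont : ContinuousAt (deriv φ) w₀ :=
        (hder_an w₀ trivial).continuousAt
      set m₀ : ℝ := ‖deriv φ w₀‖ / 2 with hm₀
      have hm₀0 : 0 < m₀ := by
        rw [hm₀]
        have := norm_pos_iff.mpr hd0
        linarith
      obtain ⟨r, hr0, hrball⟩ := Metric.continuousAt_iff.mp hder_cont m₀ hm₀0
      have hrlow : ∀ w : ℂ, dist w w₀ < r → m₀ ≤ ‖deriv φ w‖ := by
        intro w hw
        have h1 := hrball hw
        rw [Complex.dist_eq] at h1
        have h2 : ‖deriv φ w₀‖ - ‖deriv φ w‖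
            ≤ ‖deriv φ w - deriv φ w₀‖ := by
          have := norm_sub_norm_le (deriv φ w₀) (deriv φ w)
          calc ‖deriv φ w₀‖ - ‖deriv φ w‖
              ≤ ‖deriv φ w₀ - deriv φ w‖ := this
            _ = ‖deriv φ w - deriv φ w₀‖ := by
                rw [← norm_neg]; ring_nf
        rw [hm₀]
        rw [hm₀] at h1
        linarith
      set ε : ℝ := r / 6 with hε
      have hε0 : 0 < ε := by rw [hε]; linarith
      -- the test function
      set F : ℂ → ℂ := fun z => w₀ + (ε:ℂ) * (1 - (1-z) ^ (c':ℂ)) with hF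
      have hslit : ∀ z ∈ unitDisc, (1 - z) ∈ Complex.slitPlane := by
        intro z hz
        apply Complex.mem_slitPlane_iff.mpr
        left
        have hz1 : ‖z‖ < 1 := hz
        have := Complex.re_le_norm z
        simp only [Complex.sub_re, Complex.one_re]
        linarith
      have hne1 : ∀ z ∈ unitDisc, (1 - z) ≠ 0 := by
        intro z hz
        exact Complex.slitPlane_ne_zero (hslit z hz)
      have hFd : ∀ z ∈ unitDisc,
          HasDerivAt F ((ε:ℂ) * (c':ℂ) * (1-z) ^ ((c':ℂ)-1)) z := by
        intro z hz
        have h1 : HasDerivAt (fun w : ℂ => 1 - w) (-1) z := by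
          simpa using (hasDerivAt_id z).const_sub (1:ℂ)
        have h2 : HasDerivAt (fun w : ℂ => (1-w) ^ (c':ℂ))
            ((c':ℂ) * (1-z) ^ ((c':ℂ)-1) * (-1)) z :=
          h1.cpow_const (hslit z hz)
        have h3 : HasDerivAt (fun w : ℂ => w₀ + (ε:ℂ) * (1 - (1-w) ^ (c':ℂ)))
            ((ε:ℂ) * (-((c':ℂ) * (1-z) ^ ((c':ℂ)-1) * (-1)))) z :=
          ((h2.const_sub (1:ℂ)).const_mul (ε:ℂ)).const_add w₀
        have h4 : (ε:ℂ) * (-((c':ℂ) * (1-z) ^ ((c':ℂ)-1) * (-1)))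
            = (ε:ℂ) * (c':ℂ) * (1-z) ^ ((c':ℂ)-1) := by ring
        rw [h4] at h3
        exact h3
      have hFderiv : ∀ z ∈ unitDisc,
          deriv F z = (ε:ℂ) * (c':ℂ) * (1-z) ^ ((c':ℂ)-1) :=
        fun z hz => (hFd z hz).deriv
      have habsF : ∀ z ∈ unitDisc,
          ‖deriv F z‖ = (ε * c') * ‖z - 1‖ ^ (-γ) := by
        intro z hz
        rw [hFderiv z hz, norm_mul, norm_mul]
        have h1 : ‖(1-z) ^ ((c':ℂ)-1)‖ = ‖1-z‖ ^ (-γ) := by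
          rw [Complex.norm_cpow_of_ne_zero (hne1 z hz)]
          simp only [Complex.sub_im, Complex.ofReal_im, Complex.one_im, sub_self,
            Complex.sub_re, Complex.ofReal_re, Complex.one_re]
          rw [mul_zero, Real.exp_zero, div_one]
          congr 1
          rw [hc']
          ring
        rw [h1]
        have h2 : ‖1 - z‖ = ‖z - 1‖ := by
          rw [← norm_neg]; ring_nf
        rw [h2, Complex.norm_real, Complex.norm_real, Real.norm_eq_abs, Real.norm_eq_abs,
          abs_of_pos hε0, abs_of_pos hc'0]
      have hFdiff : DifferentiableOn ℂ F unitDisc :=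
        fun z hz => ((hFd z hz).differentiableAt).differentiableWithinAt
      have hFanal : AnalyticOn ℂ F unitDisc := hFdiff.analyticOn isOpen_unitDisc
      -- F maps the disc into the ball around w₀ of radius r
      have hFim : ∀ z ∈ unitDisc, dist (F z) w₀ < r := by
        intro z hz
        have hz1 : ‖z‖ < 1 := hz
        rw [Complex.dist_eq, hF]
        have h1 : w₀ + (ε:ℂ) * (1 - (1-z) ^ (c':ℂ)) - w₀
            = (ε:ℂ) * (1 - (1-z) ^ (c':ℂ)) := by ring
        rw [h1, norm_mul, Complex.norm_real, Real.norm_eq_abs, abs_of_pos hε0]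
        have h2 : ‖(1-z) ^ (c':ℂ)‖ = ‖1-z‖ ^ c' := by
          rw [Complex.norm_cpow_of_ne_zero (hne1 z hz)]
          simp only [Complex.ofReal_im, Complex.ofReal_re]
          rw [mul_zero, Real.exp_zero, div_one]
        have h3 : ‖1-z‖ ≤ 2 := by
          have h := norm_sub_le (1:ℂ) z
          simp only [norm_one] at h
          linarith
        have h4 : ‖1-z‖ ^ c' ≤ 2 := by
          calc ‖1-z‖ ^ c' ≤ (2:ℝ) ^ c' :=
              Real.rpow_le_rpow (norm_nonneg _) h3 hc'0.le
            _ ≤ (2:ℝ) ^ (1:ℝ) :=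
              Real.rpow_le_rpow_of_exponent_le one_le_two hc'1.le
            _ = 2 := Real.rpow_one 2
        have h5 : ‖1 - (1-z) ^ (c':ℂ)‖ ≤ 3 := by
          have h := norm_sub_le (1:ℂ) ((1-z) ^ (c':ℂ))
          simp only [norm_one] at h
          rw [h2] at h
          linarith
        calc ε * ‖1 - (1-z) ^ (c':ℂ)‖ ≤ ε * 3 :=
            mul_le_mul_of_nonneg_left h5 hε0.le
          _ < r := by rw [hε]; linarith
      -- F belongs to Q_s
      have hQ : MemQ s F := by
        apply memQ_of_deriv_bound hs hγ0 hγ1 (by positivity : (0:ℝ) ≤ ε * c') hFanal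
        intro z hz
        rw [habsF z hz]
      -- the superposition is in D^p_α by hypothesis
      obtain ⟨-, hDint⟩ := H F hQ
      -- but its integral is infinite
      set m : ℝ := γ * p with hmdef
      have hmgt : α + 2 < m := by
        rw [hmdef, hγ, ht]
        have : (1 + (α+2)/p)/2 * p = (p + (α+2))/2 := by field_simp
        rw [this]
        linarith
      have hm0' : 0 < m := by rw [hmdef]; exact mul_pos hγ0 hp0
      set c₀ : ℝ := (m₀ * (ε * c')) ^ p with hc₀def
      have hc₀0 : 0 < c₀ := by
        rw [hc₀def]
        exact Real.rpow_pos_of_pos (by positivity) p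
      have hptlower : ∀ z ∈ unitDisc,
          ENNReal.ofReal (c₀ * ((1 - ‖z‖ ^ 2) ^ α * ‖z - 1‖ ^ (-m)))
            ≤ ENNReal.ofReal ((1 - ‖z‖ ^ 2) ^ α *
                ‖deriv (φ ∘ F) z‖ ^ p) := by
        intro z hz
        apply ENNReal.ofReal_le_ofReal
        have hz1 : ‖z‖ < 1 := hz
        have hder : deriv (φ ∘ F) z = deriv φ (F z) * deriv F z :=
          deriv_comp z (hφ.differentiableAt) (hFd z hz).differentiableAt
        have hFz : m₀ ≤ ‖deriv φ (F z)‖ := hrlow (F z) (hFim z hz)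
        have habs : (m₀ * (ε * c')) * ‖z - 1‖ ^ (-γ)
            ≤ ‖deriv (φ ∘ F) z‖ := by
          rw [hder, norm_mul, habsF z hz]
          have hX : (0:ℝ) ≤ ‖z-1‖ ^ (-γ) :=
            Real.rpow_nonneg (norm_nonneg _) _
          have h' : m₀ * ((ε * c') * ‖z-1‖ ^ (-γ))
              ≤ ‖deriv φ (F z)‖ * ((ε * c') * ‖z-1‖ ^ (-γ)) :=
            mul_le_mul_of_nonneg_right hFz (mul_nonneg (by positivity) hX)
          calc (m₀ * (ε * c')) * ‖z - 1‖ ^ (-γ)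
              = m₀ * ((ε * c') * ‖z-1‖ ^ (-γ)) := by ring
            _ ≤ ‖deriv φ (F z)‖ * ((ε * c') * ‖z-1‖ ^ (-γ)) := h'
            _ = ‖deriv φ (F z)‖ * (ε * c' * ‖z-1‖ ^ (-γ)) := by
                ring
        have hpow : ((m₀ * (ε * c')) * ‖z - 1‖ ^ (-γ)) ^ p
            ≤ ‖deriv (φ ∘ F) z‖ ^ p :=
          Real.rpow_le_rpow (by positivity) habs hp0.le
        have heq : ((m₀ * (ε * c')) * ‖z - 1‖ ^ (-γ)) ^ p
            = c₀ * ‖z - 1‖ ^ (-m) := by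
          rw [Real.mul_rpow (by positivity) (Real.rpow_nonneg (norm_nonneg _) _),
            ← Real.rpow_mul (norm_nonneg _), hc₀def, hmdef]
          ring_nf
        have hwnn : 0 ≤ (1 - ‖z‖ ^ 2) ^ α := by
          apply Real.rpow_nonneg
          nlinarith [norm_nonneg z]
        calc c₀ * ((1 - ‖z‖ ^ 2) ^ α * ‖z - 1‖ ^ (-m))
            = (1 - ‖z‖ ^ 2) ^ α * (c₀ * ‖z - 1‖ ^ (-m)) := by ring
          _ = (1 - ‖z‖ ^ 2) ^ α *
              (((m₀ * (ε * c')) * ‖z - 1‖ ^ (-γ)) ^ p) := by rw [heq]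
          _ ≤ (1 - ‖z‖ ^ 2) ^ α * ‖deriv (φ ∘ F) z‖ ^ p :=
              mul_le_mul_of_nonneg_left hpow hwnn
      have htop : (∫⁻ z in unitDisc,
          ENNReal.ofReal ((1 - ‖z‖ ^ 2) ^ α *
            ‖deriv (φ ∘ F) z‖ ^ p)) = ⊤ := by
        apply top_unique
        calc (⊤:ENNReal) = ∫⁻ z in unitDisc,
            ENNReal.ofReal (c₀ * ((1 - ‖z‖ ^ 2) ^ α *
              ‖z - 1‖ ^ (-m))) := (lemB hmgt hm0' hc₀0).symm
          _ ≤ _ := setLIntegral_mono' measurableSet_unitDisc hptlower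
      rw [htop] at hDint
      exact lt_irrefl _ hDint
    exact ⟨φ 0, fun w => is_const_of_deriv_eq_zero hφ hall w 0⟩
  · -- backward direction
    rintro ⟨k, hk⟩ f hf
    have hconst : (φ ∘ f) = fun _ => k := funext fun z => hk (f z)
    constructor
    · rw [hconst]
      exact analyticOn_const
    · rw [hconst]
      have : ∀ z : ℂ, ENNReal.ofReal ((1 - ‖z‖ ^ 2) ^ α *
          ‖deriv (fun _ : ℂ => k) z‖ ^ p) = 0 := by
        intro z
        rw [deriv_const]
        rw [norm_zero, Real.zero_rpow (by linarith : p ≠ 0), mul_zero]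
        exact ENNReal.ofReal_zero
      simp only [this]
      rw [lintegral_const]
      simp
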